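/- The relation on the free abelian group P defined by m ≤ m' if and only if m' · m^{-1} lies in the submonoid Q⁺ generated by the elements A_{i,s} is a partial order (reflexive, transitive, and antisymmetric). -/

import Mathlib

/-
Reflexivity and transitivity hold because `Q⁺` is a submonoid. For antisymmetry, give `Y_{1,s}`,
`Y_{2,s}`, `Y_{3,s}` the weights `3, 5, 6`: then `A_{1,s}`, `A_{2,s}`, `A_{3,s}` have degrees
`1, 1, 2`, so every nonzero element of `Q⁺` has positive degree and `Q⁺ ∩ -Q⁺ = 0`.
-/

/-- Monomials of type `C₃`: finitely supported exponent functions on `{1,2,3} × ℤ`. -/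
abbrev Mon : Type := (Fin 3 × ℤ) →₀ ℤ

/-- The generator `Y_{i,s}` (index `i : Fin 3` stands for `i+1 ∈ {1,2,3}`). -/
noncomputable def Y (i : Fin 3) (s : ℤ) : Mon := Finsupp.single (i, s) 1

/-- The elements `A_{i,s}` of type `C₃` (written additively on exponents). -/
noncomputable def A : Fin 3 → ℤ → Mon
  | 0, s => Y 0 (s + 1) + Y 0 (s - 1) - Y 1 s
  | 1, s => Y 1 (s + 1) + Y 1 (s - 1) - Y 0 s - Y 2 s
  | 2, s => Y 2 (s + 2) + Y 2 (s - 2) - Y 1 (s + 1) - Y 1 (s - 1)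

/-- Right-negativity. -/
def RightNegative (u : Mon) : Prop :=
  ∀ (i : Fin 3) (s : ℤ), u (i, s) ≠ 0 → (∀ (j : Fin 3) (t : ℤ), s < t → u (j, t) = 0) →
    u (i, s) < 0

/-- Dominance: all exponents nonnegative. -/
def Dominant (u : Mon) : Prop := ∀ p : Fin 3 × ℤ, 0 ≤ u p

/-- `Q⁺`: the submonoid generated by the `A_{i,s}`. -/
noncomputable def Qplus : AddSubmonoid Mon :=
  AddSubmonoid.closure (Set.range fun p : Fin 3 × ℤ => A p.1 p.2)

/-- The order `m ≤ m'` iff `m' · m⁻¹ ∈ Q⁺` (additively: `m' - m ∈ Q⁺`). -/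
def Mle (m m' : Mon) : Prop := m' - m ∈ Qplus

namespace AddSubmonoid

theorem eq_zero_or_pos_of_mem_closure {G M : Type*} [AddMonoid G] [AddMonoid M] [Preorder M]
    [AddLeftStrictMono M] (φ : G →+ M) {s : Set G} (hs : ∀ x ∈ s, 0 < φ x) {x : G}
    (hx : x ∈ closure s) : x = 0 ∨ 0 < φ x := by
  induction hx using closure_induction with
  | mem x hx => exact .inr (hs x hx)
  | zero => exact .inl rfl
  | add a b _ _ ha hb =>
    rcases ha with rfl | ha
    · simpa using hb
    rcases hb with rfl | hb
    · simpa using .inr ha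
    exact .inr (map_add φ a b ▸ add_pos ha hb)

theorem eq_zero_of_mem_closure_of_neg_mem {G M : Type*} [AddGroup G] [AddCommGroup M]
    [PartialOrder M] [IsOrderedAddMonoid M] (φ : G →+ M) {s : Set G} (hs : ∀ x ∈ s, 0 < φ x)
    {x : G} (hx : x ∈ closure s) (hnx : -x ∈ closure s) : x = 0 := by
  rcases eq_zero_or_pos_of_mem_closure φ hs hx with h | hpos
  · exact h
  rcases eq_zero_or_pos_of_mem_closure φ hs hnx with h | hneg
  · exact neg_eq_zero.mp h
  rw [map_neg, Left.neg_pos_iff] at hneg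
  exact absurd hpos hneg.not_gt

end AddSubmonoid

noncomputable def weight : Mon →+ ℤ :=
  (Finsupp.linearCombination ℤ fun p : Fin 3 × ℤ => ![3, 5, 6] p.1).toAddMonoidHom

theorem weight_Y (i : Fin 3) (s : ℤ) : weight (Y i s) = ![3, 5, 6] i := by
  simp [weight, Y]

theorem weight_A_pos (i : Fin 3) (s : ℤ) : 0 < weight (A i s) := by
  fin_cases i <;> simp [A, weight_Y]

theorem eq_zero_of_mem_Qplus_of_neg_mem {x : Mon} (hx : x ∈ Qplus) (hnx : -x ∈ Qplus) :
    x = 0 :=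
  AddSubmonoid.eq_zero_of_mem_closure_of_neg_mem weight
    (by rintro _ ⟨p, rfl⟩; exact weight_A_pos p.1 p.2) hx hnx

/-- The relation `Mle` is a partial order: reflexive, transitive and antisymmetric. -/
theorem Mle_partialOrder :
    (∀ m : Mon, Mle m m) ∧
    (∀ a b c : Mon, Mle a b → Mle b c → Mle a c) ∧
    (∀ a b : Mon, Mle a b → Mle b a → a = b) := by
  refine ⟨fun m => ?_, fun a b c hab hbc => ?_, fun a b hab hba => ?_⟩
  · simp [Mle, Qplus.zero_mem]
  · exact (sub_add_sub_cancel c b a ▸ Qplus.add_mem hbc hab : c - a ∈ Qplus)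
  · have hzero := eq_zero_of_mem_Qplus_of_neg_mem hab (by rwa [neg_sub])
    exact (sub_eq_zero.mp hzero).symm
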